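/- For each n ≥ 2 and m ≥ 2 there exists a nonnegative primitive tensor A of order m and dimension n with γ(A) = (n−1)² + 1; namely, take A with a_{i i₂ ⋯ i_m} positive exactly when i₂ = ⋯ = i_m and M(A) equals the Wielandt matrix (the companion-type 0-1 matrix with 1's in positions (1, n−1), (1, n), and (i+1, i) for 1 ≤ i ≤ n−1). -/

import Mathlib

open Finset

/- An order-`m` dimension-`n` nonnegative tensor is encoded as
`A : Fin n → (Fin (m-1) → Fin n) → ℝ`, with `A i t = a_{i t₁ ⋯ t_{m-1}}`. -/

/-- The majorization matrix `M(A)_{ij} = a_{ij⋯j}`. -/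
def maj (n m : ℕ) (A : Fin n → (Fin (m-1) → Fin n) → ℝ) :
    Matrix (Fin n) (Fin n) ℝ :=
  fun i j => A i (fun _ => j)

/-- The majorization matrices of the Shao-product powers of `A`:
`majPow n m A k = M(A^k)`, via the recursion
`M(A^{k+1})_{uj} = Σ_{j₂,…,j_m} a_{u j₂ ⋯ j_m} M(A^k)_{j₂ j} ⋯ M(A^k)_{j_m j}`
(with `M(A^0)` the identity, so that `majPow n m A 1 = maj n m A`). -/
def majPow (n m : ℕ) (A : Fin n → (Fin (m-1) → Fin n) → ℝ) :
    ℕ → Matrix (Fin n) (Fin n) ℝ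
  | 0 => 1
  | k + 1 => fun u j =>
      ∑ t : Fin (m-1) → Fin n, A u t * ∏ i, majPow n m A k (t i) j

/-- `A` is primitive: `M(A^r) > 0` entrywise for some positive `r`. -/
def Primitive (n m : ℕ) (A : Fin n → (Fin (m-1) → Fin n) → ℝ) : Prop :=
  ∃ r, 0 < r ∧ ∀ u j, 0 < majPow n m A r u j

/-- The Wielandt matrix (0-indexed): ones at `(0, n-2)`, `(0, n-1)` and
`(i+1, i)` for `0 ≤ i ≤ n-2`. -/
def wielandt (n : ℕ) : Matrix (Fin n) (Fin n) ℝ :=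
  fun i j =>
    if (i.val = 0 ∧ (j.val = n - 2 ∨ j.val = n - 1)) ∨ i.val = j.val + 1
    then 1 else 0

/-!
Because the tensor is supported on constant trailing indices, `M(A^k)_{uv} > 0` exactly when
the Wielandt digraph (edges `0 → n-2`, `0 → n-1`, `i+1 → i`) has a walk of length `k` from `u`
to `v`.
With `n = N + 2`, the closed walks through `0` have lengths `a(N+2) + b(N+1)`, and every integer
`≥ N(N+1)` has this form; this yields walks of length `(N+1)² + 1` between any two vertices.
A walk of length `k > 0` from `u` to the last vertex `N+1` has `k = u + a(N+2) + b(N+1) + 1`,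
which is impossible for `u = N+1` and `k = (N+1)²` since `N² + N - 1` is the Frobenius number of
`N+1, N+2`.
-/

def HasWalk {α : Type*} (R : α → α → Prop) : ℕ → α → α → Prop
  | 0 => Eq
  | k + 1 => fun u v => ∃ c, R u c ∧ HasWalk R k c v

namespace HasWalk

variable {α : Type*} {R : α → α → Prop}

theorem zero_iff {u v : α} : HasWalk R 0 u v ↔ u = v := Iff.rfl

theorem succ_iff {k : ℕ} {u v : α} :
    HasWalk R (k + 1) u v ↔ ∃ c, R u c ∧ HasWalk R k c v :=
  Iff.rfl

theorem append {k l : ℕ} {u c v : α} (h₁ : HasWalk R k u c) (h₂ : HasWalk R l c v) :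
    HasWalk R (k + l) u v := by
  induction k generalizing u with
  | zero => rw [zero_iff] at h₁; subst h₁; simpa using h₂
  | succ k ih =>
    obtain ⟨c', hR, h⟩ := h₁
    rw [Nat.add_right_comm]
    exact ⟨c', hR, ih h⟩

theorem mul_of_closed {k : ℕ} {u : α} (h : HasWalk R k u u) (a : ℕ) :
    HasWalk R (a * k) u u := by
  induction a with
  | zero => simpa using zero_iff.mpr rfl
  | succ a ih => rw [Nat.succ_mul]; exact ih.append h

theorem forall_of_le (hR : ∀ u, ∃ c, R u c) {k l : ℕ} (hkl : k ≤ l)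
    (h : ∀ u v, HasWalk R k u v) (u v : α) : HasWalk R l u v := by
  induction l, hkl using Nat.le_induction generalizing u with
  | base => exact h u v
  | succ l _ ih => obtain ⟨c, hc⟩ := hR u; exact ⟨c, hc, ih c⟩

end HasWalk

section Tensor

variable {n m : ℕ} {A : Fin n → (Fin (m-1) → Fin n) → ℝ}

theorem majPow_nonneg (hA : ∀ u t, 0 ≤ A u t) (k : ℕ) (u j : Fin n) :
    0 ≤ majPow n m A k u j := by
  induction k generalizing u j with
  | zero => simp only [majPow, Matrix.one_apply]; positivity
  | succ k ih =>
    exact sum_nonneg fun t _ => mul_nonneg (hA u t) (prod_nonneg fun i _ => ih _ j)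

theorem majPow_succ_pos_iff (hm : 2 ≤ m) (hA : ∀ u t, 0 ≤ A u t)
    (hsupp : ∀ (i : Fin n) (t : Fin (m-1) → Fin n), (¬ ∀ k k', t k = t k') → A i t = 0)
    (k : ℕ) (u j : Fin n) :
    0 < majPow n m A (k + 1) u j ↔ ∃ c, 0 < maj n m A u c ∧ 0 < majPow n m A k c j := by
  let i₀ : Fin (m-1) := ⟨0, by omega⟩
  have hprod_pos {c : Fin n} :
      0 < ∏ _i : Fin (m-1), majPow n m A k c j ↔ 0 < majPow n m A k c j := by
    refine ⟨fun h => (majPow_nonneg hA k c j).lt_of_ne fun h0 => h.ne' ?_,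
      fun h => prod_pos fun _ _ => h⟩
    exact prod_eq_zero (mem_univ i₀) h0.symm
  simp only [majPow]
  rw [sum_pos_iff_of_nonneg fun t _ =>
    mul_nonneg (hA u t) (prod_nonneg fun i _ => majPow_nonneg hA k _ j)]
  constructor
  · rintro ⟨t, -, ht⟩
    have hAt : 0 < A u t := pos_of_mul_pos_left ht (prod_nonneg fun i _ => majPow_nonneg hA k _ j)
    have hconst : t = fun _ => t i₀ := by
      by_contra hne
      exact hAt.ne' (hsupp u t fun hall => hne (funext fun k => hall k i₀))
    rw [hconst] at ht hAt
    exact ⟨t i₀, hAt, hprod_pos.mp (pos_of_mul_pos_right ht hAt.le)⟩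
  · rintro ⟨c, hc, hpos⟩
    exact ⟨fun _ => c, mem_univ _, mul_pos hc (hprod_pos.mpr hpos)⟩

theorem majPow_pos_iff_hasWalk (hm : 2 ≤ m) (hA : ∀ u t, 0 ≤ A u t)
    (hsupp : ∀ (i : Fin n) (t : Fin (m-1) → Fin n), (¬ ∀ k k', t k = t k') → A i t = 0)
    (k : ℕ) (u j : Fin n) :
    0 < majPow n m A k u j ↔ HasWalk (fun a b => 0 < maj n m A a b) k u j := by
  induction k generalizing u with
  | zero =>
    simp only [majPow, Matrix.one_apply, HasWalk.zero_iff]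
    split_ifs <;> simpa
  | succ k ih =>
    simp only [majPow_succ_pos_iff hm hA hsupp, ih, HasWalk.succ_iff]

end Tensor

def diagTensor (n m : ℕ) (M : Matrix (Fin n) (Fin n) ℝ) :
    Fin n → (Fin (m-1) → Fin n) → ℝ :=
  fun i t => ∑ c, if t = (fun _ => c) then M i c else 0

section DiagTensor

variable {n m : ℕ} {M : Matrix (Fin n) (Fin n) ℝ}

theorem diagTensor_nonneg (hM : ∀ i j, 0 ≤ M i j) (i : Fin n) (t : Fin (m-1) → Fin n) :
    0 ≤ diagTensor n m M i t :=
  sum_nonneg fun c _ => by split_ifs <;> simp [hM]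

theorem diagTensor_eq_zero (i : Fin n) (t : Fin (m-1) → Fin n)
    (ht : ¬ ∀ k k', t k = t k') : diagTensor n m M i t = 0 :=
  sum_eq_zero fun c _ => if_neg fun h => ht fun k k' => by simp [h]

theorem maj_diagTensor (hm : 2 ≤ m) : maj n m (diagTensor n m M) = M := by
  have : Nonempty (Fin (m-1)) := ⟨⟨0, by omega⟩⟩
  ext i j
  simp [maj, diagTensor, funext_iff]

end DiagTensor

section Wielandt

theorem wielandt_nonneg {n : ℕ} (i j : Fin n) : 0 ≤ wielandt n i j := by
  unfold wielandt; split_ifs <;> norm_num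

theorem wielandt_pos_iff {n : ℕ} (i j : Fin n) :
    0 < wielandt n i j ↔
      (i.val = 0 ∧ (j.val = n - 2 ∨ j.val = n - 1)) ∨ i.val = j.val + 1 := by
  unfold wielandt; split_ifs <;> simp_all

local notation "W" n => fun i j : Fin n => 0 < wielandt n i j

theorem hasWalk_wielandt_of_val_eq_add {n : ℕ} (k : ℕ) {u v : Fin n} (h : u.val = v.val + k) :
    HasWalk (W n) k u v := by
  induction k generalizing u with
  | zero => exact Fin.ext h
  | succ k ih =>
    exact ⟨⟨v.val + k, by omega⟩, (wielandt_pos_iff _ _).mpr (Or.inr (by simp; omega)),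
      ih rfl⟩

variable {N : ℕ}

theorem exists_wielandt_pos (u : Fin (N+2)) : ∃ c, 0 < wielandt (N+2) u c := by
  by_cases hu : u.val = 0
  · exact ⟨Fin.last _, (wielandt_pos_iff _ _).mpr (Or.inl ⟨hu, Or.inr rfl⟩)⟩
  · exact ⟨⟨u.val - 1, by omega⟩, (wielandt_pos_iff _ _).mpr (Or.inr (by simp; omega))⟩

theorem hasWalk_wielandt_via_zero {u v c : Fin (N+2)} (hc : c.val = N ∨ c.val = N + 1)
    (hvc : v.val ≤ c.val) : HasWalk (W (N+2)) (u.val + 1 + (c.val - v.val)) u v := by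
  have h₀ : HasWalk (W (N+2)) u.val u 0 := hasWalk_wielandt_of_val_eq_add _ (by simp)
  have hedge : HasWalk (W (N+2)) 1 0 c :=
    ⟨c, (wielandt_pos_iff _ _).mpr (Or.inl ⟨rfl, by omega⟩), rfl⟩
  exact (h₀.append hedge).append (hasWalk_wielandt_of_val_eq_add _ (by omega))

theorem hasWalk_wielandt_closed {v : Fin (N+2)} (hv : v.val ≤ N) (a b : ℕ) :
    HasWalk (W (N+2)) (a * (N + 2) + b * (N + 1)) v v := by
  have hlong := hasWalk_wielandt_via_zero (u := v) (v := v) (c := ⟨N + 1, by omega⟩)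
    (Or.inr rfl) (by simp; omega)
  have hshort := hasWalk_wielandt_via_zero (u := v) (v := v) (c := ⟨N, by omega⟩)
    (Or.inl rfl) hv
  simp only at hlong hshort
  rw [show v.val + 1 + (N + 1 - v.val) = N + 2 by omega] at hlong
  rw [show v.val + 1 + (N - v.val) = N + 1 by omega] at hshort
  exact (hlong.mul_of_closed a).append (hshort.mul_of_closed b)

theorem exists_eq_mul_add_mul_of_le {x : ℕ} (hx : N * (N + 1) ≤ x) :
    ∃ a b, x = a * (N + 2) + b * (N + 1) := by
  have hq : N ≤ x / (N + 1) := (Nat.le_div_iff_mul_le (by omega)).mpr hx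
  have hr : x % (N + 1) ≤ N := Nat.lt_succ_iff.mp (Nat.mod_lt _ (by omega))
  refine ⟨x % (N + 1), x / (N + 1) - x % (N + 1), ?_⟩
  zify [hq.trans' hr]
  have := Nat.mod_add_div x (N + 1)
  zify at this
  linear_combination -this

theorem hasWalk_wielandt_sq_add_one (u v : Fin (N+2)) :
    HasWalk (W (N+2)) ((N + 1) ^ 2 + 1) u v := by
  have hu := u.isLt
  have hv := v.isLt
  rw [show (N + 1) ^ 2 + 1 = N * (N + 1) + (N + 2) by ring]
  rcases le_or_gt u.val v.val with huv | hvu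
  · -- `u → 0`, a closed walk at `0`, then `0 → N+1 → v`
    obtain ⟨a, b, hab⟩ := exists_eq_mul_add_mul_of_le (N := N)
      (x := N * (N + 1) + (v.val - u.val)) le_self_add
    have h₀ : HasWalk (W (N+2)) u.val u 0 := hasWalk_wielandt_of_val_eq_add _ (by simp)
    have hlast := hasWalk_wielandt_via_zero (u := 0) (v := v) (c := ⟨N + 1, by omega⟩)
      (Or.inr rfl) (by simp; omega)
    convert (h₀.append (hasWalk_wielandt_closed (by simp) a b)).append hlast using 1
    simp only [Fin.val_zero]
    omega
  · -- `u → v` directly, then a closed walk at `v`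
    obtain ⟨a, b, hab⟩ := exists_eq_mul_add_mul_of_le (N := N)
      (x := N * (N + 1) + (N + 2) - (u.val - v.val)) (by omega)
    have hdesc : HasWalk (W (N+2)) (u.val - v.val) u v :=
      hasWalk_wielandt_of_val_eq_add _ (by omega)
    convert hdesc.append (hasWalk_wielandt_closed (by omega) a b) using 1
    omega

theorem hasWalk_wielandt_last {k : ℕ} {u : Fin (N+2)} (h : HasWalk (W (N+2)) k u (Fin.last _)) :
    (k = 0 ∧ u.val = N + 1) ∨ ∃ a b, k = u.val + a * (N + 2) + b * (N + 1) + 1 := by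
  induction k generalizing u with
  | zero => exact Or.inl ⟨rfl, by rw [HasWalk.zero_iff.mp h]; simp⟩
  | succ k ih =>
    obtain ⟨c, hedge, hc⟩ := h
    have hu := u.isLt
    rw [wielandt_pos_iff] at hedge
    rcases ih hc with ⟨rfl, hc⟩ | ⟨a, b, rfl⟩
    · exact Or.inr ⟨0, 0, by omega⟩
    · rcases hedge with ⟨hu0, hcN | hcN⟩ | hstep
      · exact Or.inr ⟨a, b + 1, by rw [hcN, hu0]; ring_nf; omega⟩
      · exact Or.inr ⟨a + 1, b, by rw [hcN, hu0]; ring_nf; omega⟩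
      · exact Or.inr ⟨a, b, by omega⟩

theorem mul_add_mul_add_ne_sq (a b : ℕ) :
    a * (N + 2) + b * (N + 1) + (N + 2) ≠ (N + 1) ^ 2 := by
  intro h
  -- modulo `N + 1` this reads `a + 1 ≡ 0`, so `a ≥ N` and the left side is too large
  have hdvd : N + 1 ∣ a + 1 := by
    have h' : (a + 1) + (N + 1) * (a + b + 1) = (N + 1) * (N + 1) := by rw [← sq, ← h]; ring
    exact (Nat.dvd_add_left (dvd_mul_right _ _)).mp (h' ▸ dvd_mul_right _ _)
  have := Nat.le_of_dvd (by omega) hdvd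
  nlinarith

theorem not_hasWalk_wielandt_last_sq :
    ¬ HasWalk (W (N+2)) ((N + 1) ^ 2) (Fin.last _) (Fin.last _) := by
  intro h
  rcases hasWalk_wielandt_last h with ⟨h0, -⟩ | ⟨a, b, hk⟩
  · exact absurd h0 (by positivity)
  · exact mul_add_mul_add_ne_sq (N := N) a b (by simp at hk; omega)

end Wielandt

/-- sharpness — for all `n, m ≥ 2` there is a nonnegative
primitive tensor with support on equal trailing indices, majorization matrix
the Wielandt matrix, and primitive degree `(n-1)² + 1`. -/
theorem stmt_19 (n m : ℕ) (hm : 2 ≤ m) (hn : 2 ≤ n) :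
    ∃ A : Fin n → (Fin (m-1) → Fin n) → ℝ,
      (∀ u t, 0 ≤ A u t) ∧
      (∀ (i : Fin n) (t : Fin (m-1) → Fin n),
        (¬ ∀ k k' : Fin (m-1), t k = t k') → A i t = 0) ∧
      maj n m A = wielandt n ∧
      Primitive n m A ∧
      sInf {r : ℕ | 0 < r ∧ ∀ u j : Fin n, 0 < majPow n m A r u j}
        = (n - 1) ^ 2 + 1 := by
  obtain ⟨N, rfl⟩ : ∃ N, n = N + 2 := ⟨n - 2, by omega⟩
  have hA : ∀ u t, 0 ≤ diagTensor (N+2) m (wielandt (N+2)) u t :=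
    diagTensor_nonneg wielandt_nonneg
  have hmaj := maj_diagTensor (M := wielandt (N+2)) hm
  have hpos (r : ℕ) (u j : Fin (N+2)) :
      0 < majPow (N+2) m (diagTensor (N+2) m (wielandt (N+2))) r u j ↔
        HasWalk (fun a b => 0 < wielandt (N+2) a b) r u j :=
    by simpa only [hmaj] using majPow_pos_iff_hasWalk hm hA diagTensor_eq_zero r u j
  have hprim : (N + 1) ^ 2 + 1 ∈ {r : ℕ | 0 < r ∧ ∀ u j : Fin (N+2),
      0 < majPow (N+2) m (diagTensor (N+2) m (wielandt (N+2))) r u j} :=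
    ⟨by positivity, fun u j => (hpos _ u j).mpr (hasWalk_wielandt_sq_add_one u j)⟩
  refine ⟨_, hA, diagTensor_eq_zero, hmaj, ⟨_, hprim⟩, ?_⟩
  rw [show N + 2 - 1 = N + 1 by omega, Nat.sInf_upward_closed_eq_succ_iff]
  · exact ⟨hprim, fun ⟨_, h⟩ =>
      not_hasWalk_wielandt_last_sq ((hpos _ _ _).mp (h (Fin.last _) (Fin.last _)))⟩
  · rintro k l hkl ⟨hk, h⟩
    exact ⟨hk.trans_le hkl, fun u j => (hpos l u j).mpr <|
      HasWalk.forall_of_le exists_wielandt_pos hkl (fun u j => (hpos k u j).mp (h u j)) u j⟩
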